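/- arXiv:0909.4370 — 2 statements merged into one kernel-verified Lean document; each statement's English description precedes it below -/
import Mathlib

section
/- In a tree T with N vertices, if a vertex v* is a rumor center (i.e., R(v*,T) ≥ R(v,T) for all v), then for every vertex v ≠ v*, the subtree of T rooted at v with respect to root v* satisfies T_v^{v*} ≤ N/2. -/
noncomputable section

/-- The support (list of vertices) of the unique path from `a` to `b` in a connected graph. -/
def pathSupport {V : Type*} [DecidableEq V] (G : SimpleGraph V) (hG : G.Connected)
    (a b : V) : List V :=
  ((hG.preconnected a b).some.toPath : G.Walk a b).support

/-- `inSub G hG root u x` says that `x` belongs to the subtree rooted at `u`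
when the tree `G` is rooted at `root`, i.e. `u` lies on the unique path from `root` to `x`. -/
def inSub {V : Type*} [DecidableEq V] (G : SimpleGraph V) (hG : G.IsTree) (root u x : V) :
    Prop :=
  u ∈ pathSupport G hG.isConnected root x

/-- `subSize G hG root u` is the number of vertices of the subtree rooted at `u`
with respect to the root `root` (the quantity `T_u^root`). -/
def subSize {V : Type*} [DecidableEq V] (G : SimpleGraph V) (hG : G.IsTree) (root u : V) : ℕ :=
  Nat.card {x : V // inSub G hG root u x}

/-- `permCountOn G S u` is the number of permitted permutations of the vertex set `S`:
bijections `σ : Fin |S| ≃ S` starting at `u` such that every vertex appears after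
some already-placed neighbor. -/
def permCountOn {V : Type*} (G : SimpleGraph V) (S : Set V) (u : V) : ℕ :=
  Nat.card {σ : Fin (Nat.card S) ≃ S //
    (∀ i : Fin (Nat.card S), (i : ℕ) = 0 → (σ i : V) = u) ∧
    ∀ k : Fin (Nat.card S), 0 < (k : ℕ) →
      ∃ j : Fin (Nat.card S), (j : ℕ) < (k : ℕ) ∧ G.Adj (σ j : V) (σ k : V)}

/-- The rumor centrality `R(w,T) = N! / ∏_x T_x^w`. -/
def rumorCent {V : Type*} [Fintype V] [DecidableEq V] (G : SimpleGraph V) (hG : G.IsTree)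
    (w : V) : ℚ :=
  (Nat.factorial (Fintype.card V) : ℚ) / ∏ x : V, (subSize G hG w x : ℚ)

/-! Rerooting a tree across an edge `r - s` changes only two factors of `∏_x T_x`: the factor
`N` moves from `r` to `s`, and `T_s^r` is replaced by `T_r^s = N - T_s^r`. Hence
`R(r) / R(s) = (N - T_s^r) / T_s^r`, so at a rumor center every neighbour's subtree has at most
`N / 2` vertices, and subtrees only shrink along paths leading away from the root. -/

namespace SimpleGraph.IsTree

variable {V : Type*} [DecidableEq V] {G : SimpleGraph V} (hG : G.IsTree)

include hG

lemma inSub_iff_mem_support {root u x : V} {p : G.Walk x root} (hp : p.IsPath) :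
    inSub G hG root u x ↔ u ∈ p.support := by
  have hq := ((hG.connected.preconnected root x).some.toPath).2
  rw [inSub, pathSupport,
    Subtype.mk.inj <| hG.isAcyclic.subsingleton_path root x |>.elim ⟨_, hq⟩ ⟨_, hp.reverse⟩,
    Walk.support_reverse, List.mem_reverse]

lemma inSub_self (root x : V) : inSub G hG root x x := by
  obtain ⟨p, hp, -⟩ := hG.existsUnique_path x root
  exact (hG.inSub_iff_mem_support hp).2 p.start_mem_support

lemma inSub_root (root x : V) : inSub G hG root root x := by
  obtain ⟨p, hp, -⟩ := hG.existsUnique_path x root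
  exact (hG.inSub_iff_mem_support hp).2 p.end_mem_support

lemma inSub_trans {root u v y : V} (huv : inSub G hG root u v) (hvy : inSub G hG root v y) :
    inSub G hG root u y := by
  obtain ⟨p, hp, -⟩ := hG.existsUnique_path y root
  rw [hG.inSub_iff_mem_support hp] at hvy ⊢
  rw [hG.inSub_iff_mem_support (hp.dropUntil hvy)] at huv
  exact p.support_dropUntil_subset_support hvy huv

lemma inSub_iff_not_inSub_of_adj {r s : V} (h : G.Adj r s) (y : V) :
    inSub G hG s r y ↔ ¬ inSub G hG r s y := by
  obtain ⟨p, hp, -⟩ := hG.existsUnique_path y r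
  obtain ⟨q, hq, -⟩ := hG.existsUnique_path y s
  rw [hG.inSub_iff_mem_support hp, hG.inSub_iff_mem_support hq]
  exact ⟨hG.isAcyclic.ne_mem_support_of_support_of_adj_of_isPath hq hp h.symm,
    not_imp_comm.1 (hG.isAcyclic.mem_support_of_ne_mem_support_of_adj_of_isPath hp hq h)⟩

lemma inSub_iff_inSub_of_adj {r s x : V} (h : G.Adj r s) (hxr : x ≠ r) (hxs : x ≠ s) (y : V) :
    inSub G hG r x y ↔ inSub G hG s x y := by
  obtain ⟨p, hp, -⟩ := hG.existsUnique_path y r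
  obtain ⟨q, hq, -⟩ := hG.existsUnique_path y s
  rw [hG.inSub_iff_mem_support hp, hG.inSub_iff_mem_support hq]
  -- one of the two paths is the other extended by the edge `r - s`
  by_cases hr : r ∈ q.support
  · simp [hG.isAcyclic.path_concat hp hq h hr, Walk.support_concat, hxs]
  · have hs := hG.isAcyclic.mem_support_of_ne_mem_support_of_adj_of_isPath hp hq h hr
    simp [hG.isAcyclic.path_concat hq hp h.symm hs, Walk.support_concat, hxr]

lemma subSize_pos [Finite V] (root u : V) : 0 < subSize G hG root u :=
  have : Nonempty {x // inSub G hG root u x} := ⟨⟨u, hG.inSub_self root u⟩⟩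
  Nat.card_pos

lemma subSize_le_of_inSub [Finite V] {root u v : V} (huv : inSub G hG root u v) :
    subSize G hG root v ≤ subSize G hG root u :=
  Nat.card_mono (Set.toFinite _) fun _ hy => hG.inSub_trans huv hy

lemma subSize_eq_of_adj {r s x : V} (h : G.Adj r s) (hxr : x ≠ r) (hxs : x ≠ s) :
    subSize G hG r x = subSize G hG s x := by
  unfold subSize
  simp only [hG.inSub_iff_inSub_of_adj h hxr hxs]

variable [Fintype V]

lemma subSize_root (root : V) : subSize G hG root root = Fintype.card V := by
  rw [subSize, Nat.card_congr (Equiv.subtypeUnivEquiv (hG.inSub_root root)),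
    Nat.card_eq_fintype_card]

lemma subSize_add_subSize_of_adj {r s : V} (h : G.Adj r s) :
    subSize G hG r s + subSize G hG s r = Fintype.card V := by
  have hcompl : {x | inSub G hG s r x} = {x | inSub G hG r s x}ᶜ := by
    ext y
    exact hG.inSub_iff_not_inSub_of_adj h y
  change Nat.card {x | inSub G hG r s x} + Nat.card {x | inSub G hG s r x} = _
  rw [Nat.card_coe_set_eq, Nat.card_coe_set_eq, hcompl, Set.ncard_add_ncard_compl,
    Nat.card_eq_fintype_card]


lemma prod_subSize_pos (root : V) : 0 < ∏ x, subSize G hG root x :=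
  Finset.prod_pos fun x _ => hG.subSize_pos root x

lemma subSize_mul_prod_eq_of_adj {r s : V} (h : G.Adj r s) :
    subSize G hG s r * ∏ x, subSize G hG r x = subSize G hG r s * ∏ x, subSize G hG s x := by
  have hrest : ∏ x ∈ {r, s}ᶜ, subSize G hG r x = ∏ x ∈ {r, s}ᶜ, subSize G hG s x :=
    Finset.prod_congr rfl fun x hx => by
      simp only [Finset.mem_compl, Finset.mem_insert, Finset.mem_singleton, not_or] at hx
      exact hG.subSize_eq_of_adj h hx.1 hx.2
  rw [← Finset.prod_mul_prod_compl {r, s}, ← Finset.prod_mul_prod_compl {r, s},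
    Finset.prod_pair h.ne, Finset.prod_pair h.ne, hG.subSize_root, hG.subSize_root, hrest]
  ring

lemma rumorCent_le_rumorCent_iff (r s : V) :
    rumorCent G hG s ≤ rumorCent G hG r ↔ ∏ x, subSize G hG r x ≤ ∏ x, subSize G hG s x := by
  unfold rumorCent
  rw [div_le_div_iff_of_pos_left (by positivity) (by exact_mod_cast hG.prod_subSize_pos s)
    (by exact_mod_cast hG.prod_subSize_pos r)]
  norm_cast

lemma two_mul_subSize_le_of_adj {r s : V} (h : G.Adj r s)
    (hle : rumorCent G hG s ≤ rumorCent G hG r) :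
    2 * subSize G hG r s ≤ Fintype.card V := by
  have hprod := (hG.rumorCent_le_rumorCent_iff r s).1 hle
  have hrs : subSize G hG r s ≤ subSize G hG s r := by
    refine Nat.le_of_mul_le_mul_right ?_ (hG.prod_subSize_pos r)
    calc subSize G hG r s * ∏ x, subSize G hG r x
        ≤ subSize G hG r s * ∏ x, subSize G hG s x := Nat.mul_le_mul_left _ hprod
      _ = subSize G hG s r * ∏ x, subSize G hG r x := (hG.subSize_mul_prod_eq_of_adj h).symm
  have := hG.subSize_add_subSize_of_adj h
  omega

end SimpleGraph.IsTree

/-- If `v*` is a rumor center of a tree on `N` vertices, then every subtree with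
respect to the root `v*` has size at most `N/2`. -/
theorem rumor_center_subtree_le_half {V : Type*} [Fintype V] [DecidableEq V]
    (G : SimpleGraph V) (hG : G.IsTree) (vstar : V)
    (hmax : ∀ v : V, rumorCent G hG v ≤ rumorCent G hG vstar) :
    ∀ v : V, v ≠ vstar → (subSize G hG vstar v : ℚ) ≤ (Fintype.card V : ℚ) / 2 := by
  intro v hv
  obtain ⟨p, hp, -⟩ := hG.existsUnique_path v vstar
  have hnil : ¬ p.Nil := SimpleGraph.Walk.not_nil_of_ne hv
  have hu : inSub G hG vstar p.penultimate v :=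
    (hG.inSub_iff_mem_support hp).2 (p.getVert_mem_support _)
  have hvu := hG.subSize_le_of_inSub hu
  have hu_half := hG.two_mul_subSize_le_of_adj (p.adj_penultimate hnil).symm (hmax _)
  rw [le_div_iff₀ two_pos]
  exact_mod_cast (by omega : subSize G hG vstar v * 2 ≤ Fintype.card V)
end
end

section
/- Let T be a tree on N vertices, let v* be a vertex of degree d with neighboring subtrees of sizes N_1,...,N_d (so Σ N_j = N-1). If max_j N_j < (1/2)·Σ_j N_j, then v* is the unique rumor center of T. -/
noncomputable section

/-!
Rerooting the tree from `u` to a neighbour `w` changes `∏ₓ Tₓ` only by replacing the factor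
`T_w^u` with `T_u^w = N - T_w^u`. So the product grows exactly when `2 T_w^u < N`. Along a
path leaving `v*` the subtree ahead of the path only shrinks, and its size at the first step is
less than `N / 2` by the balance hypothesis; hence `∏ₓ Tₓ` strictly grows at every step and the
rumor centrality strictly decreases.
-/

open SimpleGraph Finset

section RumorCenter

variable {V : Type*} [DecidableEq V] {G : SimpleGraph V} (hG : G.IsTree)

def treePath (a x : V) : G.Walk a x :=
  (hG.connected.preconnected a x).some.toPath

lemma treePath_isPath (a x : V) : (treePath hG a x).IsPath :=
  (hG.connected.preconnected a x).some.toPath.2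

lemma eq_treePath {a x : V} {p : G.Walk a x} (hp : p.IsPath) : p = treePath hG a x :=
  congrArg Subtype.val
    ((hG.isAcyclic.subsingleton_path a x).elim ⟨p, hp⟩ ⟨_, treePath_isPath hG a x⟩)

lemma treePath_eq_cons_of_not_mem {u v x : V} (huv : G.Adj u v)
    (hu : u ∉ (treePath hG v x).support) :
    treePath hG u x = .cons huv (treePath hG v x) :=
  (eq_treePath hG ((treePath_isPath hG v x).cons hu)).symm

lemma treePath_eq_cons_of_mem {u v x : V} (huv : G.Adj u v)
    (hv : v ∈ (treePath hG u x).support) :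
    treePath hG u x = .cons huv (treePath hG v x) := by
  have hedge : (treePath hG u x).takeUntil v hv = .cons huv .nil :=
    (eq_treePath hG ((treePath_isPath hG u x).takeUntil hv)).trans
      (eq_treePath hG (by simp [huv.ne])).symm
  have hrest : (treePath hG u x).dropUntil v hv = treePath hG v x :=
    eq_treePath hG ((treePath_isPath hG u x).dropUntil hv)
  conv_lhs => rw [← (treePath hG u x).take_spec hv, hedge, hrest]
  rfl

lemma treePath_eq_cons_or {u v : V} (huv : G.Adj u v) (x : V) :
    treePath hG u x = .cons huv (treePath hG v x) ∨
      treePath hG v x = .cons huv.symm (treePath hG u x) := by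
  by_cases hu : u ∈ (treePath hG v x).support
  · exact .inr (treePath_eq_cons_of_mem hG huv.symm hu)
  · exact .inl (treePath_eq_cons_of_not_mem hG huv hu)

lemma mem_treePath_iff_not_mem {u v x : V} (huv : G.Adj u v) :
    v ∈ (treePath hG u x).support ↔ u ∉ (treePath hG v x).support := by
  refine ⟨fun hv => ?_, fun hu => ?_⟩
  · have hpath := treePath_isPath hG u x
    rw [treePath_eq_cons_of_mem hG huv hv, Walk.cons_isPath_iff] at hpath
    exact hpath.2
  · simp [treePath_eq_cons_of_not_mem hG huv hu]

lemma mem_treePath_iff_of_adj {u v m x : V} (huv : G.Adj u v) (hmu : m ≠ u) (hmv : m ≠ v) :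
    m ∈ (treePath hG u x).support ↔ m ∈ (treePath hG v x).support := by
  rcases treePath_eq_cons_or hG huv x with h | h <;> simp [h, hmu, hmv]

lemma eq_of_adj_of_mem_treePath {a b c x : V} (hab : G.Adj a b) (hac : G.Adj a c)
    (hb : b ∈ (treePath hG a x).support) (hc : c ∈ (treePath hG a x).support) : b = c := by
  simpa using congrArg Walk.snd
    ((treePath_eq_cons_of_mem hG hab hb).symm.trans (treePath_eq_cons_of_mem hG hac hc))

lemma mem_treePath_of_adj_of_adj {a u w x : V} (hau : G.Adj a u) (huw : G.Adj u w)
    (haw : a ≠ w) (hw : w ∈ (treePath hG u x).support) : u ∈ (treePath hG a x).support := by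
  by_contra hu
  exact haw (eq_of_adj_of_mem_treePath hG hau.symm huw
    ((mem_treePath_iff_not_mem hG hau.symm).2 hu) hw)

variable [Fintype V]

lemma subSize_eq_card (a u : V) :
    subSize G hG a u = #{x | u ∈ (treePath hG a x).support} := by
  change Nat.card {x // u ∈ (treePath hG a x).support} = _
  rw [Nat.card_eq_fintype_card, Fintype.card_subtype]

lemma subSize_pos (a u : V) : 0 < subSize G hG a u := by
  rw [subSize_eq_card]
  exact card_pos.2 ⟨u, by simp⟩

lemma subSize_self (a : V) : subSize G hG a a = Fintype.card V := by
  simp [subSize_eq_card]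

lemma subSize_add_subSize {u v : V} (huv : G.Adj u v) :
    subSize G hG u v + subSize G hG v u = Fintype.card V := by
  rw [subSize_eq_card, subSize_eq_card, add_comm, ← card_univ]
  simp only [mem_treePath_iff_not_mem hG huv]
  exact card_filter_add_card_filter_not _

lemma subSize_eq_of_adj {u v m : V} (huv : G.Adj u v) (hmu : m ≠ u) (hmv : m ≠ v) :
    subSize G hG u m = subSize G hG v m := by
  simp only [subSize_eq_card, mem_treePath_iff_of_adj hG huv hmu hmv]

lemma subSize_le_of_adj_of_adj {a u w : V} (hau : G.Adj a u) (huw : G.Adj u w) (haw : a ≠ w) :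
    subSize G hG u w ≤ subSize G hG a u := by
  simp only [subSize_eq_card]
  exact card_le_card fun x => by simpa using mem_treePath_of_adj_of_adj hG hau huw haw

lemma sum_subSize_neighborFinset_le [DecidableRel G.Adj] (v : V) :
    ∑ b ∈ G.neighborFinset v, subSize G hG v b ≤ Fintype.card V := by
  simp only [subSize_eq_card]
  rw [← card_biUnion]
  · exact card_le_univ _
  · intro b hb c hc hbc
    simp only [Function.onFun, disjoint_filter]
    intro x _ hbx hcx
    exact hbc (eq_of_adj_of_mem_treePath hG (by simpa using hb) (by simpa using hc) hbx hcx)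

lemma subSize_mul_prod_subSize {u w : V} (huw : G.Adj u w) :
    subSize G hG w u * ∏ x, subSize G hG u x = subSize G hG u w * ∏ x, subSize G hG w x := by
  have hrest : ∏ x ∈ (univ.erase u).erase w, subSize G hG u x =
      ∏ x ∈ (univ.erase u).erase w, subSize G hG w x :=
    prod_congr rfl fun x hx => by
      simp only [mem_erase, mem_univ, and_true] at hx
      exact subSize_eq_of_adj hG huw hx.2 hx.1
  rw [← mul_prod_erase univ (subSize G hG u) (mem_univ u),
    ← mul_prod_erase _ (subSize G hG u) (mem_erase.2 ⟨huw.ne', mem_univ w⟩), hrest,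
    ← mul_prod_erase univ (subSize G hG w) (mem_univ w),
    ← mul_prod_erase _ (subSize G hG w) (mem_erase.2 ⟨huw.ne, mem_univ u⟩), erase_right_comm,
    subSize_self, subSize_self]
  ring

lemma prod_subSize_lt_of_adj {u w : V} (huw : G.Adj u w)
    (h : 2 * subSize G hG u w < Fintype.card V) :
    ∏ x, subSize G hG u x < ∏ x, subSize G hG w x := by
  have hlt : subSize G hG u w < subSize G hG w u := by
    have := subSize_add_subSize hG huw
    omega
  have hpos : 0 < ∏ x, subSize G hG w x := prod_pos fun x _ => subSize_pos hG w x
  refine Nat.lt_of_mul_lt_mul_left (a := subSize G hG w u) ?_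
  rw [subSize_mul_prod_subSize hG huw]
  exact Nat.mul_lt_mul_of_pos_right hlt hpos

section Balanced

variable [DecidableRel G.Adj] {v : V}
  (hv : ∀ b ∈ G.neighborFinset v, 2 * subSize G hG v b < Fintype.card V)
include hv

lemma two_mul_subSize_lt_of_isPath {u w : V} (hwu : G.Adj w u) (p : G.Walk u v)
    (hp : (Walk.cons hwu p).IsPath) : 2 * subSize G hG u w < Fintype.card V := by
  induction p generalizing w with
  | nil => exact hv w (by simpa using hwu.symm)
  | @cons u b _ hub q ih =>
    have hbw : b ≠ w := by
      rintro rfl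
      exact ((Walk.cons_isPath_iff _ _).1 hp).2 (by simp)
    have := ih hv hub hp.of_cons
    have := subSize_le_of_adj_of_adj hG hub.symm hwu.symm hbw
    omega

lemma prod_subSize_lt_of_isPath {u w : V} (hwu : G.Adj w u) (p : G.Walk u v)
    (hp : (Walk.cons hwu p).IsPath) : ∏ x, subSize G hG v x < ∏ x, subSize G hG w x := by
  induction p generalizing w with
  | nil => exact prod_subSize_lt_of_adj hG hwu.symm (hv w (by simpa using hwu.symm))
  | cons hub q ih =>
    exact (ih hv hub hp.of_cons).trans (prod_subSize_lt_of_adj hG hwu.symm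
      (two_mul_subSize_lt_of_isPath hG hv hwu _ hp))

end Balanced

lemma rumorCent_lt_of_prod_subSize_lt {v w : V}
    (h : ∏ x, subSize G hG v x < ∏ x, subSize G hG w x) :
    rumorCent G hG w < rumorCent G hG v := by
  unfold rumorCent
  have hpos : 0 < ∏ x, subSize G hG v x := prod_pos fun x _ => subSize_pos hG v x
  exact div_lt_div_of_pos_left (by positivity) (by exact_mod_cast hpos) (by exact_mod_cast h)

end RumorCenter

theorem balanced_subtrees_unique_rumor_center_general {V : Type*} [Fintype V] [DecidableEq V]
    (G : SimpleGraph V) [DecidableRel G.Adj] (hG : G.IsTree) (vstar : V)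
    (hbal : ∀ u ∈ G.neighborFinset vstar,
      (subSize G hG vstar u : ℚ) <
        (∑ w ∈ G.neighborFinset vstar, (subSize G hG vstar w : ℚ)) / 2) :
    ∀ w : V, w ≠ vstar → rumorCent G hG w < rumorCent G hG vstar := by
  intro w hw
  have hsum : ∑ b ∈ G.neighborFinset vstar, (subSize G hG vstar b : ℚ) ≤ Fintype.card V := by
    exact_mod_cast sum_subSize_neighborFinset_le hG vstar
  have hv : ∀ b ∈ G.neighborFinset vstar, 2 * subSize G hG vstar b < Fintype.card V :=
    fun b hb => by
      have := hbal b hb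
      exact_mod_cast (by linarith : (2 * subSize G hG vstar b : ℚ) < Fintype.card V)
  obtain ⟨p, hp⟩ : ∃ p : G.Walk w vstar, p.IsPath := ⟨_, treePath_isPath hG w vstar⟩
  cases p with
  | nil => exact absurd rfl hw
  | cons hwu q =>
    exact rumorCent_lt_of_prod_subSize_lt hG (prod_subSize_lt_of_isPath hG hv hwu q hp)

/-- If each of the `d` neighboring subtrees of a vertex `v*` of degree `d` has size
strictly less than half of the total size `∑_j N_j = N - 1` of all of them, then
`v*` is the unique rumor center. -/
theorem balanced_subtrees_unique_rumor_center {V : Type*} [Fintype V] [DecidableEq V]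
    (G : SimpleGraph V) [DecidableRel G.Adj] (hG : G.IsTree) (vstar : V) (d : ℕ)
    (hdeg : G.degree vstar = d)
    (hbal : ∀ u ∈ G.neighborFinset vstar,
      (subSize G hG vstar u : ℚ) <
        (∑ w ∈ G.neighborFinset vstar, (subSize G hG vstar w : ℚ)) / 2) :
    ∀ w : V, w ≠ vstar → rumorCent G hG w < rumorCent G hG vstar :=
  balanced_subtrees_unique_rumor_center_general G hG vstar hbal
end
end
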